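/- If p_n > 1 for all n (and sup_n p_n < ∞), the space l(r,s,t,p;Δ) with the Luxemburg norm is rotund (strictly convex): for every x with ‖x‖ = 1 and y, z in the closed unit ball with x = (y+z)/2, one has y = z. -/

import Mathlib

open Finset Filter Topology ENNReal

/-- The difference operator `Δ` with the convention `x₋₁ = 0`. -/
def del (x : ℕ → ℝ) (k : ℕ) : ℝ :=
  x k - if k = 0 then 0 else x (k - 1)

/-- The generalized-means-of-differences transform `(A(r,s,t)·Δ)x`. -/
noncomputable def Amap (r s t : ℕ → ℝ) (x : ℕ → ℝ) (n : ℕ) : ℝ :=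
  (1 / r n) * ∑ k ∈ Finset.range (n + 1), s (n - k) * t k * del x k

/-- The modular `σ_p` on `l(r,s,t,p;Δ)`, with values in `[0,∞]`. -/
noncomputable def sigmaP (r s t p : ℕ → ℝ) (x : ℕ → ℝ) : ℝ≥0∞ :=
  ∑' n, ENNReal.ofReal (|Amap r s t x n| ^ p n)

/-- The space `l(r,s,t,p;Δ)`. -/
def lrstp (r s t p : ℕ → ℝ) : Set (ℕ → ℝ) :=
  {x | sigmaP r s t p x < ⊤}

/-- The paranorm `h̃` on `l(r,s,t,p;Δ)`. -/
noncomputable def htilde (r s t p : ℕ → ℝ) (M : ℝ) (x : ℕ → ℝ) : ℝ :=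
  ((sigmaP r s t p x).toReal) ^ (1 / M)

/-- The Luxemburg norm on `l(r,s,t,p;Δ)`. -/
noncomputable def lux (r s t p : ℕ → ℝ) (x : ℕ → ℝ) : ℝ :=
  sInf {c : ℝ | 0 < c ∧ sigmaP r s t p (c⁻¹ • x) ≤ 1}


/-!
The modular `σ_p` is built from `u ↦ |u| ^ p n`, which is strictly convex for `p n > 1`, and
`x ↦ A(r,s,t)Δx` is injective because it is a triangular system with nonzero diagonal
`s 0 * t n / r n`. So if `y ≠ z` lie in the unit ball (where `σ_p ≤ 1`), some coordinate of the
transform differs and `σ_p((y + z)/2) < (σ_p y + σ_p z)/2 ≤ 1`. Since `p` is bounded by `M`,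
`σ_p(c⁻¹ x) ≤ c⁻ᴹ σ_p(x) ≤ 1` for some `c < 1`, so `‖(y + z)/2‖ < 1`.
-/

lemma strictConvexOn_abs_rpow {q : ℝ} (hq : 1 < q) :
    StrictConvexOn ℝ Set.univ (fun x : ℝ => |x| ^ q) := by
  refine ⟨convex_univ, fun x _ y _ hxy a b ha hb hab => ?_⟩
  simp only [smul_eq_mul]
  have htri : |a * x + b * y| ≤ a * |x| + b * |y| := by
    simpa only [abs_mul, abs_of_pos ha, abs_of_pos hb] using abs_add_le (a * x) (b * y)
  rcases ne_or_eq |x| |y| with hne | heq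
  · calc |a * x + b * y| ^ q ≤ (a * |x| + b * |y|) ^ q :=
          Real.rpow_le_rpow (abs_nonneg _) htri (by linarith)
      _ < a * |x| ^ q + b * |y| ^ q :=
          (strictConvexOn_rpow hq).2 (Set.mem_Ici.2 (abs_nonneg x)) (Set.mem_Ici.2 (abs_nonneg y))
            hne ha hb hab
  · have hx : x = -y := (abs_eq_abs.1 heq).resolve_left hxy
    have hy : 0 < |y| := abs_pos.2 fun hy => hxy (by rw [hx, hy, neg_zero])
    have hstrict : |a * x + b * y| < a * |x| + b * |y| := by
      rw [hx, abs_neg, ← add_mul, hab, one_mul, show a * -y + b * y = (b - a) * y by ring,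
        abs_mul]
      exact mul_lt_of_lt_one_left hy (abs_sub_lt_iff.2 ⟨by linarith, by linarith⟩)
    calc |a * x + b * y| ^ q < (a * |x| + b * |y|) ^ q :=
          Real.rpow_lt_rpow (abs_nonneg _) hstrict (by linarith)
      _ = a * |x| ^ q + b * |y| ^ q := by rw [← heq, ← add_mul, ← add_mul, hab, one_mul, one_mul]

lemma del_add (y z : ℕ → ℝ) (k : ℕ) : del (y + z) k = del y k + del z k := by
  simp only [del, Pi.add_apply]; split_ifs <;> ring

lemma del_smul (c : ℝ) (y : ℕ → ℝ) (k : ℕ) : del (c • y) k = c * del y k := by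
  simp only [del, Pi.smul_apply, smul_eq_mul]; split_ifs <;> ring

lemma del_injective : Function.Injective del := by
  intro y z h
  funext n
  induction n with
  | zero => simpa [del] using congrFun h 0
  | succ n ih =>
    have h' := congrFun h (n + 1)
    simp only [del, Nat.succ_ne_zero, if_false, Nat.add_sub_cancel, ih] at h'
    linarith

section Amap

variable {r s t : ℕ → ℝ}

lemma Amap_add (y z : ℕ → ℝ) (n : ℕ) :
    Amap r s t (y + z) n = Amap r s t y n + Amap r s t z n := by
  simp only [Amap, del_add, mul_add, Finset.sum_add_distrib]

lemma Amap_smul (c : ℝ) (y : ℕ → ℝ) (n : ℕ) : Amap r s t (c • y) n = c * Amap r s t y n := by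
  simp only [Amap, del_smul, Finset.mul_sum]
  exact Finset.sum_congr rfl fun _ _ => by ring

lemma Amap_injective (hr : ∀ n, r n ≠ 0) (ht : ∀ n, t n ≠ 0) (hs0 : s 0 ≠ 0) :
    Function.Injective (Amap r s t) := by
  intro y z h
  apply del_injective
  funext n
  induction n using Nat.strong_induction_on with
  | _ n ih =>
    have hsum := mul_left_cancel₀ (one_div_ne_zero (hr n)) (congrFun h n)
    rw [Finset.sum_range_succ, Finset.sum_range_succ,
      Finset.sum_congr rfl fun k hk => by rw [ih k (Finset.mem_range.1 hk)], Nat.sub_self] at hsum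
    exact mul_left_cancel₀ (mul_ne_zero hs0 (ht n)) (add_left_cancel hsum)

end Amap

section Modular

variable {r s t p : ℕ → ℝ}

lemma sigmaP_smul_le {a K : ℝ} (ha : 0 ≤ a) (hK : ∀ n, a ^ p n ≤ K) (x : ℕ → ℝ) :
    sigmaP r s t p (a • x) ≤ ENNReal.ofReal K * sigmaP r s t p x := by
  rw [sigmaP, sigmaP, ← ENNReal.tsum_mul_left]
  refine ENNReal.tsum_le_tsum fun n => ?_
  rw [Amap_smul, abs_mul, abs_of_nonneg ha, Real.mul_rpow ha (abs_nonneg _),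
    ← ENNReal.ofReal_mul ((Real.rpow_nonneg ha _).trans (hK n))]
  exact ENNReal.ofReal_le_ofReal (mul_le_mul_of_nonneg_right (hK n) (by positivity))

lemma sigmaP_smul_le_rpow_mul {M : ℝ} (hpM : ∀ n, p n ≤ M) {a : ℝ} (ha : 1 ≤ a)
    (x : ℕ → ℝ) : sigmaP r s t p (a • x) ≤ ENNReal.ofReal (a ^ M) * sigmaP r s t p x :=
  sigmaP_smul_le (by linarith) (fun n => Real.rpow_le_rpow_of_exponent_le ha (hpM n)) x

lemma sigmaP_smul_le_mul (hp : ∀ n, 1 ≤ p n) {a : ℝ} (ha₀ : 0 < a) (ha₁ : a ≤ 1)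
    (x : ℕ → ℝ) : sigmaP r s t p (a • x) ≤ ENNReal.ofReal a * sigmaP r s t p x :=
  sigmaP_smul_le ha₀.le
    (fun n => by simpa using Real.rpow_le_rpow_of_exponent_ge ha₀ ha₁ (hp n)) x

lemma sigmaP_smul_mono (hp : ∀ n, 0 ≤ p n) {a b : ℝ} (ha : 0 ≤ a) (hab : a ≤ b)
    (x : ℕ → ℝ) : sigmaP r s t p (a • x) ≤ sigmaP r s t p (b • x) := by
  refine ENNReal.tsum_le_tsum fun n => ENNReal.ofReal_le_ofReal ?_
  rw [Amap_smul, Amap_smul, abs_mul, abs_mul]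
  exact Real.rpow_le_rpow (by positivity)
    (mul_le_mul_of_nonneg_right (abs_le_abs_of_nonneg ha hab) (abs_nonneg _)) (hp n)

lemma two_mul_sigmaP_midpoint_lt (hp : ∀ n, 1 < p n) {y z : ℕ → ℝ}
    (hy : sigmaP r s t p y ≠ ⊤) (hz : sigmaP r s t p z ≠ ⊤)
    (hyz : Amap r s t y ≠ Amap r s t z) :
    2 * sigmaP r s t p ((1 / 2 : ℝ) • (y + z)) < sigmaP r s t p y + sigmaP r s t p z := by
  obtain ⟨m, hm⟩ := Function.ne_iff.1 hyz
  set a := Amap r s t y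
  set b := Amap r s t z
  set u : ℕ → ℝ := fun n => 2 * |Amap r s t ((1 / 2 : ℝ) • (y + z)) n| ^ p n
  set v : ℕ → ℝ := fun n => |a n| ^ p n + |b n| ^ p n
  have hmid : ∀ n, Amap r s t ((1 / 2 : ℝ) • (y + z)) n = (1 / 2 : ℝ) • a n + (1 / 2 : ℝ) • b n :=
    fun n => by rw [Amap_smul, Amap_add, smul_eq_mul, smul_eq_mul, mul_add]
  have hle : ∀ n, u n ≤ v n := fun n => by
    have := (strictConvexOn_abs_rpow (hp n)).convexOn.2 (Set.mem_univ (a n))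
      (Set.mem_univ (b n)) (by norm_num : (0 : ℝ) ≤ 1 / 2) (by norm_num : (0 : ℝ) ≤ 1 / 2)
      (by norm_num)
    simp only [u, v, hmid, smul_eq_mul] at this ⊢
    linarith
  have hlt : u m < v m := by
    have := (strictConvexOn_abs_rpow (hp m)).2 (Set.mem_univ (a m)) (Set.mem_univ (b m)) hm
      (by norm_num : (0 : ℝ) < 1 / 2) (by norm_num : (0 : ℝ) < 1 / 2) (by norm_num)
    simp only [u, v, hmid, smul_eq_mul] at this ⊢
    linarith
  have hu : 2 * sigmaP r s t p ((1 / 2 : ℝ) • (y + z)) = ∑' n, ENNReal.ofReal (u n) := by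
    rw [sigmaP, ← ENNReal.tsum_mul_left]
    simp only [u, ENNReal.ofReal_mul zero_le_two, ENNReal.ofReal_ofNat]
  have hv : sigmaP r s t p y + sigmaP r s t p z = ∑' n, ENNReal.ofReal (v n) := by
    rw [sigmaP, sigmaP, ← ENNReal.tsum_add]
    exact tsum_congr fun n => (ENNReal.ofReal_add (by positivity) (by positivity)).symm
  rw [hu, hv]
  have hle' : ∀ n, ENNReal.ofReal (u n) ≤ ENNReal.ofReal (v n) :=
    fun n => ENNReal.ofReal_le_ofReal (hle n)
  refine ENNReal.tsum_lt_tsum (i := m) ?_ hle' ((ENNReal.ofReal_lt_ofReal_iff ?_).2 hlt)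
  · exact ne_top_of_le_ne_top (hv ▸ ENNReal.add_ne_top.2 ⟨hy, hz⟩) (ENNReal.tsum_le_tsum hle')
  · exact (by positivity : (0 : ℝ) ≤ u m).trans_lt hlt

end Modular

section Luxemburg

variable {r s t p : ℕ → ℝ}

lemma exists_sigmaP_inv_smul_le_one (hp : ∀ n, 1 ≤ p n) {x : ℕ → ℝ}
    (hx : sigmaP r s t p x ≠ ⊤) : ∃ c : ℝ, 0 < c ∧ sigmaP r s t p (c⁻¹ • x) ≤ 1 := by
  set c := (sigmaP r s t p x).toReal + 1
  have hc : 1 ≤ c := by simp [c]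
  refine ⟨c, by linarith, ?_⟩
  calc sigmaP r s t p (c⁻¹ • x) ≤ ENNReal.ofReal c⁻¹ * sigmaP r s t p x :=
        sigmaP_smul_le_mul hp (by positivity) (inv_le_one_of_one_le₀ hc) x
    _ = ENNReal.ofReal (c⁻¹ * (sigmaP r s t p x).toReal) := by
        rw [ENNReal.ofReal_mul (by positivity), ENNReal.ofReal_toReal hx]
    _ ≤ 1 := ENNReal.ofReal_le_one.2 <| by
        rw [inv_mul_le_iff₀ (by linarith), mul_one]; linarith

lemma sigmaP_le_one_of_lux_le_one {M : ℝ} (hp : ∀ n, 1 ≤ p n) (hpM : ∀ n, p n ≤ M)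
    {x : ℕ → ℝ} (hx : sigmaP r s t p x ≠ ⊤) (h : lux r s t p x ≤ 1) : sigmaP r s t p x ≤ 1 := by
  have hbound : ∀ c : ℝ, 1 < c → sigmaP r s t p x ≤ ENNReal.ofReal (c ^ M) := by
    intro c hc
    obtain ⟨c₀, ⟨hc₀, hσc₀⟩, hc₀c⟩ :=
      exists_lt_of_csInf_lt (exists_sigmaP_inv_smul_le_one hp hx) (h.trans_lt hc)
    calc sigmaP r s t p x = sigmaP r s t p (c • c⁻¹ • x) := by
          rw [smul_inv_smul₀ (by positivity)]
      _ ≤ ENNReal.ofReal (c ^ M) * sigmaP r s t p (c⁻¹ • x) :=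
          sigmaP_smul_le_rpow_mul hpM hc.le _
      _ ≤ ENNReal.ofReal (c ^ M) * sigmaP r s t p (c₀⁻¹ • x) := by
          gcongr
          exact sigmaP_smul_mono (fun n => by linarith [hp n]) (by positivity)
            (inv_anti₀ hc₀ hc₀c.le) x
      _ ≤ ENNReal.ofReal (c ^ M) := mul_le_of_le_one_right' hσc₀
  have htend : Tendsto (fun c : ℝ => ENNReal.ofReal (c ^ M)) (𝓝[>] 1) (𝓝 1) := by
    have := (ENNReal.continuous_ofReal.tendsto _).comp
      (Real.continuousAt_rpow_const 1 M (Or.inl one_ne_zero)).tendsto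
    simpa [Function.comp_def] using this.mono_left nhdsWithin_le_nhds
  exact ge_of_tendsto htend (eventually_nhdsWithin_of_forall hbound)

lemma lux_lt_one_of_sigmaP_lt_one {M : ℝ} (hpM : ∀ n, p n ≤ M) {x : ℕ → ℝ}
    (h : sigmaP r s t p x < 1) : lux r s t p x < 1 := by
  have hσ : (sigmaP r s t p x).toReal < 1 :=
    ENNReal.toReal_lt_of_lt_ofReal (by rwa [ENNReal.ofReal_one])
  have htend : Tendsto (fun c : ℝ => c ^ M) (𝓝[<] 1) (𝓝 1) := by
    simpa using (Real.continuousAt_rpow_const 1 M (Or.inl one_ne_zero)).tendsto.mono_left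
      nhdsWithin_le_nhds
  obtain ⟨c, hσc, hc₀, hc₁⟩ :=
    ((htend.eventually (lt_mem_nhds hσ)).and (Ioo_mem_nhdsLT zero_lt_one)).exists
  have hmem : sigmaP r s t p (c⁻¹ • x) ≤ 1 :=
    calc sigmaP r s t p (c⁻¹ • x) ≤ ENNReal.ofReal (c⁻¹ ^ M) * sigmaP r s t p x :=
          sigmaP_smul_le_rpow_mul hpM ((one_le_inv₀ hc₀).2 hc₁.le) x
      _ = ENNReal.ofReal (c⁻¹ ^ M * (sigmaP r s t p x).toReal) := by
          rw [ENNReal.ofReal_mul (by positivity), ENNReal.ofReal_toReal h.ne_top]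
      _ ≤ 1 := ENNReal.ofReal_le_one.2 <| by
          rw [Real.inv_rpow hc₀.le, inv_mul_le_iff₀ (by positivity), mul_one]; exact hσc.le
  have hlux : lux r s t p x ≤ c := csInf_le ⟨0, fun _ hd => hd.1.le⟩ ⟨hc₀, hmem⟩
  exact hlux.trans_lt hc₁

end Luxemburg

theorem lrstp_rotund_general
    (r s t p : ℕ → ℝ) (hr : ∀ n, r n ≠ 0) (ht : ∀ n, t n ≠ 0) (hs0 : s 0 ≠ 0)
    (M : ℝ) (hp : ∀ n, 1 < p n) (hpM : ∀ n, p n ≤ M)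
    (x y z : ℕ → ℝ)
    (hy : y ∈ lrstp r s t p) (hz : z ∈ lrstp r s t p)
    (hx1 : lux r s t p x = 1) (hy1 : lux r s t p y ≤ 1) (hz1 : lux r s t p z ≤ 1)
    (hmid : x = (1 / 2 : ℝ) • (y + z)) :
    y = z := by
  have hy' : sigmaP r s t p y ≠ ⊤ := ne_of_lt hy
  have hz' : sigmaP r s t p z ≠ ⊤ := ne_of_lt hz
  have hσy := sigmaP_le_one_of_lux_le_one (fun n => (hp n).le) hpM hy' hy1
  have hσz := sigmaP_le_one_of_lux_le_one (fun n => (hp n).le) hpM hz' hz1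
  by_contra hyz
  have hlt : 2 * sigmaP r s t p x < 2 * 1 := by
    rw [hmid]
    calc _ < sigmaP r s t p y + sigmaP r s t p z :=
          two_mul_sigmaP_midpoint_lt hp hy' hz' ((Amap_injective hr ht hs0).ne hyz)
      _ ≤ 2 * 1 := by rw [two_mul]; exact add_le_add hσy hσz
  have hσx : sigmaP r s t p x < 1 := (ENNReal.mul_lt_mul_iff_right two_ne_zero ofNat_ne_top).1 hlt
  exact (lux_lt_one_of_sigmaP_lt_one hpM hσx).ne hx1

theorem lrstp_rotund
    (r s t p : ℕ → ℝ) (hr : ∀ n, r n ≠ 0) (ht : ∀ n, t n ≠ 0) (hs0 : s 0 ≠ 0)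
    (M : ℝ) (hp : ∀ n, 1 < p n) (hpM : ∀ n, p n ≤ M)
    (x y z : ℕ → ℝ)
    (hx : x ∈ lrstp r s t p) (hy : y ∈ lrstp r s t p) (hz : z ∈ lrstp r s t p)
    (hx1 : lux r s t p x = 1) (hy1 : lux r s t p y ≤ 1) (hz1 : lux r s t p z ≤ 1)
    (hmid : x = (1 / 2 : ℝ) • (y + z)) :
    y = z :=
  lrstp_rotund_general r s t p hr ht hs0 M hp hpM x y z hy hz hx1 hy1 hz1 hmid
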